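/- arXiv:2007.05192 — 14 statements merged into one kernel-verified Lean document; each statement's English description precedes it below -/
import Mathlib

section
/- For equivalence relations σ and π on a set U, the partition implication σ⇒π equals the discrete partition 1 (the equality relation) if and only if π refines σ, i.e., if and only if x ∼_π y implies x ∼_σ y for all x, y ∈ U. -/
/-- The partition implication `σ⇒π` as an equivalence relation (Setoid):
`x ∼ y` iff `x = y`, or (`x ∼_π y` and the π-class `{z | x ∼_π z}` is not a
subset of the σ-class `{z | x ∼_σ z}`). -/
def pimp {U : Type*} (σ π : Setoid U) : Setoid U where
  r x y := x = y ∨ (π.r x y ∧ ¬ ({z | π.r x z} ⊆ {z | σ.r x z}))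
  iseqv := by
    refine ⟨fun x => Or.inl rfl, ?_, ?_⟩
    · rintro x y (rfl | ⟨hxy, hns⟩)
      · exact Or.inl rfl
      · refine Or.inr ⟨π.iseqv.symm hxy, fun hsub => hns ?_⟩
        intro z hz
        have hyz : π.r y z := π.iseqv.trans (π.iseqv.symm hxy) hz
        have h1 : σ.r y z := hsub hyz
        have h2 : σ.r y x := hsub (π.iseqv.symm hxy)
        exact σ.iseqv.trans (σ.iseqv.symm h2) h1
    · rintro x y z (rfl | ⟨hxy, hns⟩) h2
      · exact h2
      · rcases h2 with rfl | ⟨hyz, _⟩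
        · exact Or.inr ⟨hxy, hns⟩
        · exact Or.inr ⟨π.iseqv.trans hxy hyz, hns⟩

/-- `σ⇒π = 1` (the discrete partition, i.e. equality) iff `π` refines `σ`. -/
theorem pimp_eq_one_iff_refines {U : Type*} (σ π : Setoid U) :
    (∀ x y : U, (pimp σ π).r x y ↔ x = y) ↔ (∀ x y : U, π.r x y → σ.r x y) := by
  constructor
  · intro h x y hxy
    by_contra hns
    have : (pimp σ π).r x y := Or.inr ⟨hxy, fun hsub => hns (hsub hxy)⟩
    have : x = y := (h x y).mp this
    exact hns (this ▸ σ.iseqv.refl x)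
  · intro h x y
    constructor
    · rintro (rfl | ⟨hxy, hns⟩)
      · rfl
      · exact absurd (fun z hz => h x z hz) hns
    · rintro rfl; exact Or.inl rfl
end

section
/- For equivalence relations σ and π on a set U, the equivalence relation of the partition implication σ⇒π equals the reflexive-symmetric-transitive closure (the generated equivalence relation) of the relation G defined by G(x,y) iff x ∼_π y and ¬(x ∼_σ y). That is, the blocks of σ⇒π are the connected components of the graph on U whose edges are the pairs that are indistinctions of π and distinctions of σ. -/
/-- Graph-theoretic definition: `σ⇒π` is the equivalence relation generated by
the pairs that are indistinctions of `π` and distinctions of `σ` (its blocks are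
the connected components of that graph). -/
theorem pimp_eq_eqvGen {U : Type*} (σ π : Setoid U) (x y : U) :
    (pimp σ π).r x y ↔ Relation.EqvGen (fun a b => π.r a b ∧ ¬ σ.r a b) x y := by
  constructor
  · rintro (rfl | ⟨hxy, hns⟩)
    · exact Relation.EqvGen.refl x
    · rw [Set.not_subset] at hns
      obtain ⟨z, hπz, hσz⟩ := hns
      by_cases hσxy : σ.r x y
      · have h1 : Relation.EqvGen (fun a b => π.r a b ∧ ¬ σ.r a b) x z :=
          Relation.EqvGen.rel _ _ ⟨hπz, hσz⟩
        have hσzy : ¬ σ.r z y := fun h => hσz (σ.iseqv.trans hσxy (σ.iseqv.symm h))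
        have hπzy : π.r z y := π.iseqv.trans (π.iseqv.symm hπz) hxy
        exact h1.trans _ _ _ (Relation.EqvGen.rel _ _ ⟨hπzy, hσzy⟩)
      · exact Relation.EqvGen.rel _ _ ⟨hxy, hσxy⟩
  · intro h
    induction h with
    | rel a b hab =>
        refine Or.inr ⟨hab.1, fun hsub => hab.2 (hsub hab.1)⟩
    | refl a => exact Or.inl rfl
    | symm a b _ ih => exact (pimp σ π).iseqv.symm ih
    | trans a b c _ _ ih1 ih2 => exact (pimp σ π).iseqv.trans ih1 ih2
end

section
/- For equivalence relations σ, π, τ on a set U, the following are equivalent: (i) dit(τ) ∩ dit(σ) ⊆ dit(π), i.e., for all x, y, if ¬(x ∼_τ y) and ¬(x ∼_σ y) then ¬(x ∼_π y); (ii) τ ≼ σ⇒π, i.e., dit(τ) ⊆ dit(σ⇒π), equivalently x ∼_{σ⇒π} y implies x ∼_τ y for all x, y. (The adjunctive characterization of the partition implication.) -/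
/-- The adjunctive characterization of the partition implication:
`dit(τ) ∩ dit(σ) ⊆ dit(π)` iff `τ ≼ σ⇒π`. -/
theorem pimp_adjunction {U : Type*} (σ π τ : Setoid U) :
    (∀ x y : U, ¬ τ.r x y → ¬ σ.r x y → ¬ π.r x y) ↔
    (∀ x y : U, (pimp σ π).r x y → τ.r x y) := by
  constructor
  · intro H x y h
    rcases h with rfl | ⟨hxy, hns⟩
    · exact τ.iseqv.refl x
    · rw [Set.not_subset] at hns
      obtain ⟨w, hpw, hsw⟩ := hns
      have htxw : τ.r x w := by
        by_contra ht
        exact H x w ht hsw hpw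
      by_cases hsxy : σ.r x y
      · have hsyw : ¬ σ.r y w := fun h => hsw (σ.iseqv.trans hsxy h)
        have hpyw : π.r y w := π.iseqv.trans (π.iseqv.symm hxy) hpw
        have htyw : τ.r y w := by
          by_contra ht
          exact H y w ht hsyw hpyw
        exact τ.iseqv.trans htxw (τ.iseqv.symm htyw)
      · by_contra ht
        exact H x y ht hsxy hxy
  · intro H x y ht hs hp
    exact ht (H x y (Or.inr ⟨hp, fun hsub => hs (hsub hp)⟩))
end

section
/- Modus ponens is a partition tautology: for any equivalence relations σ and π on a set U, (σ ∧ (σ⇒π)) ⇒ π = 1, i.e., π refines the partition meet σ ∧ (σ⇒π). Concretely, for all x, y ∈ U, if x ∼_π y then (x, y) belongs to the equivalence relation generated by ∼_σ ∪ ∼_{σ⇒π}; in fact x ∼_π y implies x ∼_σ y or x ∼_{σ⇒π} y. -/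
/-- The partition meet `σ∧τ`: the smallest equivalence relation containing
both `∼_σ` and `∼_τ`. -/
def pmeet {U : Type*} (σ τ : Setoid U) : Setoid U :=
  Relation.EqvGen.setoid (fun x y => σ.r x y ∨ τ.r x y)

/-- Modus ponens is a partition tautology: `(σ ∧ (σ⇒π)) ⇒ π = 1`. -/
theorem modus_ponens {U : Type*} (σ π : Setoid U) :
    (∀ x y : U, (pimp (pmeet σ (pimp σ π)) π).r x y ↔ x = y) ∧
    (∀ x y : U, π.r x y →
      Relation.EqvGen (fun a b => σ.r a b ∨ (pimp σ π).r a b) x y) ∧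
    (∀ x y : U, π.r x y → σ.r x y ∨ (pimp σ π).r x y) := by
  have key : ∀ x y : U, π.r x y → σ.r x y ∨ (pimp σ π).r x y := by
    intro x y hxy
    by_cases hsub : {z | π.r x z} ⊆ {z | σ.r x z}
    · exact Or.inl (hsub hxy)
    · exact Or.inr (Or.inr ⟨hxy, hsub⟩)
  refine ⟨?_, fun x y h => Relation.EqvGen.rel _ _ (key x y h), key⟩
  intro x y
  constructor
  · rintro (rfl | ⟨hxy, hns⟩)
    · rfl
    · exfalso
      apply hns
      intro z hz
      exact Relation.EqvGen.rel _ _ (key x z hz)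
  · rintro rfl; exact Or.inl rfl
end

section
/- For equivalence relations σ and π on a set U, the double π-negation ¬_π¬_π σ = (σ⇒π)⇒π satisfies: x ∼_{(σ⇒π)⇒π} y if and only if x = y, or (x ∼_π y and the π-class {z : x ∼_π z} IS a subset of the σ-class {z : x ∼_σ z}). That is, the double π-negation discretizes exactly those blocks of π that are not contained in any block of σ and keeps whole exactly those blocks of π contained in a block of σ. -/
/-- The double π-negation `(σ⇒π)⇒π` keeps whole exactly the blocks of `π`
contained in a block of `σ` and discretizes the rest. -/
theorem double_neg_char {U : Type*} (σ π : Setoid U) (x y : U) :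
    (pimp (pimp σ π) π).r x y ↔
      (x = y ∨ (π.r x y ∧ {z | π.r x z} ⊆ {z | σ.r x z})) := by
  show (x = y ∨ (π.r x y ∧ ¬ ({z | π.r x z} ⊆ {z | (pimp σ π).r x z}))) ↔ _
  by_cases hsub : {z | π.r x z} ⊆ {z | σ.r x z}
  · constructor
    · rintro (rfl | ⟨hxy, _⟩)
      · exact Or.inl rfl
      · exact Or.inr ⟨hxy, hsub⟩
    · rintro (rfl | ⟨hxy, _⟩)
      · exact Or.inl rfl
      · by_cases hxy' : x = y
        · exact Or.inl hxy'
        · refine Or.inr ⟨hxy, fun h => ?_⟩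
          rcases h hxy with rfl | ⟨_, hns⟩
          · exact hxy' rfl
          · exact hns hsub
  · have hsub' : {z | π.r x z} ⊆ {z | (pimp σ π).r x z} := fun z hz => Or.inr ⟨hz, hsub⟩
    constructor
    · rintro (rfl | ⟨_, hns⟩)
      · exact Or.inl rfl
      · exact absurd hsub' hns
    · rintro (rfl | ⟨_, h⟩)
      · exact Or.inl rfl
      · exact absurd h hsub
end

section
/- For equivalence relations σ and π on a set U, the double π-negation ¬_π¬_π σ = (σ⇒π)⇒π refines the partition join σ∨π: for all x, y ∈ U, if x ∼_{(σ⇒π)⇒π} y then x ∼_σ y and x ∼_π y. In particular σ ≼ ¬_π¬_π σ, so σ ⇒ ¬_π¬_π σ is a partition tautology. -/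
/-- The double π-negation `(σ⇒π)⇒π` refines the join `σ∨π`; in particular
`σ ≼ ¬_π¬_π σ`, so `σ ⇒ ¬_π¬_π σ` is a partition tautology. -/
theorem double_neg_refines_join {U : Type*} (σ π : Setoid U) :
    (∀ x y : U, (pimp (pimp σ π) π).r x y → σ.r x y ∧ π.r x y) ∧
    (∀ x y : U, (pimp σ (pimp (pimp σ π) π)).r x y ↔ x = y) := by
  have key : ∀ x y : U, (pimp (pimp σ π) π).r x y → σ.r x y ∧ π.r x y := by
    rintro x y (rfl | ⟨hxy, hns⟩)
    · exact ⟨σ.iseqv.refl x, π.iseqv.refl x⟩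
    · rw [Set.not_subset] at hns
      obtain ⟨z, hz, hnz⟩ := hns
      have hsub : {w | π.r x w} ⊆ {w | σ.r x w} := by
        by_contra h
        exact hnz (Or.inr ⟨hz, h⟩)
      exact ⟨hsub hxy, hxy⟩
  refine ⟨key, fun x y => ⟨?_, fun h => h ▸ Or.inl rfl⟩⟩
  rintro (rfl | ⟨hxy, hns⟩)
  · rfl
  · exact absurd (fun z hz => (key x z hz).1) hns
end

section
/- Triple π-negation equals single π-negation: for any equivalence relations σ and π on a set U, (((σ⇒π)⇒π)⇒π) = (σ⇒π) as equivalence relations on U. -/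
/-- Triple π-negation equals single π-negation. -/
theorem triple_neg_eq_single {U : Type*} (σ π : Setoid U) :
    pimp (pimp (pimp σ π) π) π = pimp σ π := by
  apply Setoid.ext
  intro x y
  constructor
  · rintro (rfl | ⟨hxy, hns⟩)
    · exact Or.inl rfl
    · refine Or.inr ⟨hxy, fun hsub => hns ?_⟩
      -- hsub : π-class x ⊆ σ-class x, i.e. ¬P x
      intro z hz
      by_cases hzx : z = x
      · exact Or.inl hzx.symm
      · refine Or.inr ⟨hz, fun hsub2 => ?_⟩
        -- hsub2 : π-class x ⊆ (pimp σ π)-class x; but z witnesses failure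
        rcases hsub2 hz with h | ⟨_, hP⟩
        · exact hzx h.symm
        · exact hP hsub
  · rintro (rfl | ⟨hxy, hP⟩)
    · exact Or.inl rfl
    · refine Or.inr ⟨hxy, fun hsub => ?_⟩
      -- hP : ¬(π-class x ⊆ σ-class x); get witness z
      rw [Set.not_subset] at hP
      obtain ⟨z, hz, hzs⟩ := hP
      have hzx : z ≠ x := fun h => hzs (h ▸ σ.iseqv.refl x)
      rcases hsub hz with h | ⟨_, hQ⟩
      · exact hzx h.symm
      · -- hQ : ¬(π-class x ⊆ (pimp σ π)-class x), but it is a subset since P x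
        apply hQ
        intro w hw
        exact Or.inr ⟨hw, fun hs => hzs (hs hz)⟩
end

section
/- The weak law of excluded middle is a partition tautology: for any equivalence relations σ and π on a set U, ¬_π σ ∨ ¬_π¬_π σ = 1, i.e., for all x, y ∈ U, if x ∼_{σ⇒π} y and x ∼_{(σ⇒π)⇒π} y, then x = y. -/
/-- The weak law of excluded middle is a partition tautology:
`¬_π σ ∨ ¬_π¬_π σ = 1`. -/
theorem weak_excluded_middle {U : Type*} (σ π : Setoid U) :
    ∀ x y : U, (pimp σ π).r x y → (pimp (pimp σ π) π).r x y → x = y := by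
  intro x y h1 h2
  rcases h2 with rfl | ⟨hxy, hns⟩
  · rfl
  · rcases h1 with rfl | ⟨_, hns1⟩
    · rfl
    · exact absurd (fun z hz => Or.inr ⟨hz, hns1⟩) hns
end

section
/- For any equivalence relations σ and π on a set U, the π-negation of the excluded-middle partition equals π: ¬_π(σ ∨ ¬_π σ) = π, i.e., the partition implication (σ ∨ (σ⇒π)) ⇒ π, applied to the equivalence relation whose indistinctions are the pairs related by both σ and σ⇒π, is equal to π as an equivalence relation on U. -/
/-- The partition join `σ∨τ`: `x ∼ y` iff `x ∼_σ y` and `x ∼_τ y`. -/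
def pjoin {U : Type*} (σ τ : Setoid U) : Setoid U where
  r x y := σ.r x y ∧ τ.r x y
  iseqv := ⟨fun x => ⟨σ.iseqv.refl x, τ.iseqv.refl x⟩,
    fun h => ⟨σ.iseqv.symm h.1, τ.iseqv.symm h.2⟩,
    fun h h' => ⟨σ.iseqv.trans h.1 h'.1, τ.iseqv.trans h.2 h'.2⟩⟩

/-- The π-negation of the excluded-middle partition equals `π`:
`¬_π(σ ∨ ¬_π σ) = (σ ∨ (σ⇒π)) ⇒ π = π`. -/
theorem neg_excluded_middle_eq {U : Type*} (σ π : Setoid U) :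
    pimp (pjoin σ (pimp σ π)) π = π := by
  apply Setoid.ext
  intro x y
  constructor
  · rintro (rfl | ⟨hπ, _⟩)
    · exact π.iseqv.refl x
    · exact hπ
  · intro hπ
    by_cases hsub : {z | π.r x z} ⊆ {z | (pjoin σ (pimp σ π)).r x z}
    · -- derive x = y
      have hτ := hsub hπ
      rcases hτ.2 with rfl | ⟨_, hns⟩
      · exact Or.inl rfl
      · -- π-class of x ⊄ σ-class of x, but hsub forces ⊆, contradiction
        exfalso
        apply hns
        intro z hz
        exact (hsub hz).1
    · exact Or.inr ⟨hπ, hsub⟩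
end

section
/- The excluded-middle partition is π-dense in 1: for any equivalence relations σ and π on a set U, the double π-negation of σ ∨ ¬_π σ equals the discrete partition, i.e., ¬_π¬_π(σ ∨ (σ⇒π)) = 1, so ((σ ∨ (σ⇒π)) ⇒ π) ⇒ π is the equality relation on U. -/
/-- The excluded-middle partition is π-dense in `1`:
`¬_π¬_π(σ ∨ ¬_π σ) = 1`. -/
theorem excluded_middle_dense {U : Type*} (σ π : Setoid U) :
    ∀ x y : U, (pimp (pimp (pjoin σ (pimp σ π)) π) π).r x y ↔ x = y := by
  intro x y
  constructor
  · rintro (rfl | ⟨hxy, hns⟩)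
    · rfl
    · exfalso
      apply hns
      intro z hz
      by_cases hxz : x = z
      · exact Or.inl hxz
      · refine Or.inr ⟨hz, fun hsub => ?_⟩
        have hτ := hsub hz
        rcases hτ.2 with rfl | ⟨_, hnsσ⟩
        · exact hxz rfl
        · obtain ⟨z0, hz0, hσz0⟩ := Set.not_subset.mp hnsσ
          exact hσz0 (hsub hz0).1
  · rintro rfl
    exact Or.inl rfl
end

section
/- For any equivalence relations σ and π on a set U: σ∨π = (σ ∨ ¬_π σ) ∧ ¬_π¬_π σ. Concretely, for all x, y ∈ U: (x ∼_σ y and x ∼_π y) if and only if ((x ∼_σ y and x ∼_{σ⇒π} y) or x ∼_{(σ⇒π)⇒π} y); in particular the union of the relations σ∨¬_π σ and ¬_π¬_π σ is already an equivalence relation, so their partition meet requires no closure. -/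
/-- `σ∨π = (σ ∨ ¬_π σ) ∧ ¬_π¬_π σ`; moreover the union of the relations
`σ∨¬_π σ` and `¬_π¬_π σ` is already an equivalence relation, so the partition
meet requires no closure. -/
theorem join_eq_meet_of_em_and_dneg {U : Type*} (σ π : Setoid U) :
    (∀ x y : U, (σ.r x y ∧ π.r x y) ↔
      ((σ.r x y ∧ (pimp σ π).r x y) ∨ (pimp (pimp σ π) π).r x y)) ∧
    Equivalence (fun x y : U =>
      (σ.r x y ∧ (pimp σ π).r x y) ∨ (pimp (pimp σ π) π).r x y) := by
  have key : ∀ x y : U, (σ.r x y ∧ π.r x y) ↔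
      ((σ.r x y ∧ (pimp σ π).r x y) ∨ (pimp (pimp σ π) π).r x y) := by
    intro x y
    constructor
    · rintro ⟨hσ, hπ⟩
      by_cases hsub : {z | π.r x z} ⊆ {z | σ.r x z}
      · by_cases hex : ∃ z, π.r x z ∧ x ≠ z
        · obtain ⟨z, hz, hne⟩ := hex
          refine Or.inr (Or.inr ⟨hπ, fun h => ?_⟩)
          rcases h hz with rfl | ⟨_, hns⟩
          · exact hne rfl
          · exact hns hsub
        · have : x = y := by
            by_contra h
            exact hex ⟨y, hπ, h⟩
          exact Or.inr (Or.inl this)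
      · exact Or.inl ⟨hσ, Or.inr ⟨hπ, hsub⟩⟩
    · rintro (⟨hσ, hp⟩ | hp)
      · rcases hp with rfl | ⟨hπ, _⟩
        · exact ⟨hσ, π.iseqv.refl x⟩
        · exact ⟨hσ, hπ⟩
      · rcases hp with rfl | ⟨hπ, hns⟩
        · exact ⟨σ.iseqv.refl x, π.iseqv.refl x⟩
        · have : {z | π.r x z} ⊆ {z | σ.r x z} := by
            by_contra hsub
            exact hns fun z hz => Or.inr ⟨hz, hsub⟩
          exact ⟨this hπ, hπ⟩
  refine ⟨key, ?_, ?_, ?_⟩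
  · intro x
    exact (key x x).mp ⟨σ.iseqv.refl x, π.iseqv.refl x⟩
  · intro x y h
    obtain ⟨hσ, hπ⟩ := (key x y).mpr h
    exact (key y x).mp ⟨σ.iseqv.symm hσ, π.iseqv.symm hπ⟩
  · intro x y z h1 h2
    obtain ⟨hσ1, hπ1⟩ := (key x y).mpr h1
    obtain ⟨hσ2, hπ2⟩ := (key y z).mpr h2
    exact (key x z).mp ⟨σ.iseqv.trans hσ1 hσ2, π.iseqv.trans hπ1 hπ2⟩
end

section
/- For any equivalence relations σ, τ, π on a set U, the partition meet of the π-negations ¬_π σ ∧ ¬_π τ (the smallest equivalence relation containing ∼_{σ⇒π} ∪ ∼_{τ⇒π}) is given explicitly by: x is related to y iff x = y, or (x ∼_π y and (the π-class {z : x ∼_π z} is not a subset of the σ-class {z : x ∼_σ z}, or the π-class {z : x ∼_π z} is not a subset of the τ-class {z : x ∼_τ z})). Thus the meet acts blockwise like Boolean conjunction: a block of π is discretized in the meet iff it is discretized in both ¬_π σ and ¬_π τ. -/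
lemma pimp_aux {U : Type*} (σ π : Setoid U) {a b : U} (hab : π.r a b)
    (h : ¬ ({z | π.r a z} ⊆ {z | σ.r a z})) :
    ¬ ({z | π.r b z} ⊆ {z | σ.r b z}) := by
  intro hsub
  apply h
  intro z hz
  have hbz : π.r b z := π.iseqv.trans (π.iseqv.symm hab) hz
  have h1 : σ.r b z := hsub hbz
  have h2 : σ.r b a := hsub (π.iseqv.symm hab)
  exact σ.iseqv.trans (σ.iseqv.symm h2) h1

/-- The partition meet of π-negations `¬_π σ ∧ ¬_π τ` is given explicitly:
a block of `π` is discretized in the meet iff it is discretized in both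
`¬_π σ` and `¬_π τ` (blockwise Boolean conjunction). -/
theorem meet_of_negations {U : Type*} (σ τ π : Setoid U) :
    ∀ x y : U,
      Relation.EqvGen (fun a b => (pimp σ π).r a b ∨ (pimp τ π).r a b) x y ↔
        (x = y ∨ (π.r x y ∧
          (¬ ({z | π.r x z} ⊆ {z | σ.r x z}) ∨
           ¬ ({z | π.r x z} ⊆ {z | τ.r x z})))) := by
  intro x y
  constructor
  · intro h
    induction h with
    | rel a b hab =>
        rcases hab with (rfl | ⟨hp, hn⟩) | (rfl | ⟨hp, hn⟩)
        · exact Or.inl rfl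
        · exact Or.inr ⟨hp, Or.inl hn⟩
        · exact Or.inl rfl
        · exact Or.inr ⟨hp, Or.inr hn⟩
    | refl a => exact Or.inl rfl
    | symm a b _ ih =>
        rcases ih with rfl | ⟨hp, hn | hn⟩
        · exact Or.inl rfl
        · exact Or.inr ⟨π.iseqv.symm hp, Or.inl (pimp_aux σ π hp hn)⟩
        · exact Or.inr ⟨π.iseqv.symm hp, Or.inr (pimp_aux τ π hp hn)⟩
    | trans a b c _ _ ih1 ih2 =>
        rcases ih1 with rfl | ⟨hp1, hn1⟩
        · exact ih2
        · rcases ih2 with rfl | ⟨hp2, _⟩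
          · exact Or.inr ⟨hp1, hn1⟩
          · exact Or.inr ⟨π.iseqv.trans hp1 hp2, hn1⟩
  · rintro (rfl | ⟨hp, hn | hn⟩)
    · exact Relation.EqvGen.refl x
    · exact Relation.EqvGen.rel x y (Or.inl (Or.inr ⟨hp, hn⟩))
    · exact Relation.EqvGen.rel x y (Or.inr (Or.inr ⟨hp, hn⟩))
end

section
/- Every partition in the interval [π, 1] distributes across the Boolean core: for any equivalence relations σ, τ, π, φ on a set U such that φ refines π (i.e., x ∼_φ y implies x ∼_π y), both distributive laws hold: φ ∨ (¬_π σ ∧ ¬_π τ) = (φ ∨ ¬_π σ) ∧ (φ ∨ ¬_π τ) and φ ∧ (¬_π σ ∨ ¬_π τ) = (φ ∧ ¬_π σ) ∨ (φ ∧ ¬_π τ), as equivalence relations on U. -/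
section Aux
variable {U : Type*}

/-- `np σ π x`: the π-class of `x` is not contained in the σ-class of `x`. -/
def np (σ π : Setoid U) (x : U) : Prop := ¬ ({z | π.r x z} ⊆ {z | σ.r x z})

lemma pimp_r (σ π : Setoid U) (x y : U) :
    (pimp σ π).r x y ↔ (x = y ∨ (π.r x y ∧ np σ π x)) := Iff.rfl

lemma np_congr (σ π : Setoid U) {x y : U} (hxy : π.r x y) (hx : np σ π x) :
    np σ π y := by
  intro hsub
  apply hx
  intro z hz
  have h1 : σ.r y z := hsub (π.iseqv.trans (π.iseqv.symm hxy) hz)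
  have h2 : σ.r y x := hsub (π.iseqv.symm hxy)
  exact σ.iseqv.trans (σ.iseqv.symm h2) h1

lemma eqvgen_char (ρ : Setoid U) (Q : U → Prop)
    (hQ : ∀ x y, ρ.r x y → Q x → Q y)
    (R : U → U → Prop) (hR : ∀ x y, R x y ↔ (x = y ∨ (ρ.r x y ∧ Q x))) (x y : U) :
    Relation.EqvGen R x y ↔ (x = y ∨ (ρ.r x y ∧ Q x)) := by
  constructor
  · intro hgen
    induction hgen with
    | rel a b hab => exact (hR a b).1 hab
    | refl a => exact Or.inl rfl
    | symm a b hab ih =>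
      rcases ih with rfl | ⟨hr, hq⟩
      · exact Or.inl rfl
      · exact Or.inr ⟨ρ.iseqv.symm hr, hQ a b hr hq⟩
    | trans a b c hab hbc ih1 ih2 =>
      rcases ih1 with rfl | ⟨hr1, hq1⟩
      · exact ih2
      · rcases ih2 with rfl | ⟨hr2, _⟩
        · exact Or.inr ⟨hr1, hq1⟩
        · exact Or.inr ⟨ρ.iseqv.trans hr1 hr2, hq1⟩
  · rintro (rfl | hc)
    · exact Relation.EqvGen.refl x
    · exact Relation.EqvGen.rel x y ((hR x y).2 (Or.inr hc))

lemma eqvgen_char' (φ π : Setoid U) (h : ∀ x y : U, φ.r x y → π.r x y)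
    (Q : U → Prop) (hQ : ∀ x y, π.r x y → Q x → Q y)
    (R : U → U → Prop) (hR : ∀ x y, R x y ↔ (φ.r x y ∨ (π.r x y ∧ Q x))) (x y : U) :
    Relation.EqvGen R x y ↔ (φ.r x y ∨ (π.r x y ∧ Q x)) := by
  constructor
  · intro hgen
    induction hgen with
    | rel a b hab => exact (hR a b).1 hab
    | refl a => exact Or.inl (φ.iseqv.refl a)
    | symm a b hab ih =>
      rcases ih with hphi | ⟨hr, hq⟩
      · exact Or.inl (φ.iseqv.symm hphi)
      · exact Or.inr ⟨π.iseqv.symm hr, hQ a b hr hq⟩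
    | trans a b c hab hbc ih1 ih2 =>
      rcases ih1 with hphi1 | ⟨hr1, hq1⟩
      · rcases ih2 with hphi2 | ⟨hr2, hq2⟩
        · exact Or.inl (φ.iseqv.trans hphi1 hphi2)
        · exact Or.inr ⟨π.iseqv.trans (h _ _ hphi1) hr2,
            hQ b a (π.iseqv.symm (h _ _ hphi1)) hq2⟩
      · rcases ih2 with hphi2 | ⟨hr2, _⟩
        · exact Or.inr ⟨π.iseqv.trans hr1 (h _ _ hphi2), hq1⟩
        · exact Or.inr ⟨π.iseqv.trans hr1 hr2, hq1⟩
  · rintro (hphi | hc)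
    · exact Relation.EqvGen.rel x y ((hR x y).2 (Or.inl hphi))
    · exact Relation.EqvGen.rel x y ((hR x y).2 (Or.inr hc))

end Aux

/-- Any partition `φ` in `[π,1]` distributes across the Boolean core `B_π`. -/
theorem distributes_over_boolean_core {U : Type*} (σ τ π φ : Setoid U)
    (h : ∀ x y : U, φ.r x y → π.r x y) :
    pjoin φ (pmeet (pimp σ π) (pimp τ π)) =
      pmeet (pjoin φ (pimp σ π)) (pjoin φ (pimp τ π)) ∧
    pmeet φ (pjoin (pimp σ π) (pimp τ π)) =
      pjoin (pmeet φ (pimp σ π)) (pmeet φ (pimp τ π)) := by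
  constructor
  · -- join-distributivity
    apply Setoid.ext
    intro x y
    have hL := eqvgen_char π (fun a => np σ π a ∨ np τ π a)
      (fun a b hab hq => hq.imp (np_congr σ π hab) (np_congr τ π hab))
      (fun a b => (pimp σ π).r a b ∨ (pimp τ π).r a b)
      (fun a b => by
        constructor
        · rintro ((rfl | ⟨hp, hs⟩) | (rfl | ⟨hp, ht⟩))
          · exact Or.inl rfl
          · exact Or.inr ⟨hp, Or.inl hs⟩
          · exact Or.inl rfl
          · exact Or.inr ⟨hp, Or.inr ht⟩
        · rintro (rfl | ⟨hp, hs | ht⟩)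
          · exact Or.inl (Or.inl rfl)
          · exact Or.inl (Or.inr ⟨hp, hs⟩)
          · exact Or.inr (Or.inr ⟨hp, ht⟩)) x y
    have hR := eqvgen_char φ (fun a => np σ π a ∨ np τ π a)
      (fun a b hab hq =>
        hq.imp (np_congr σ π (h a b hab)) (np_congr τ π (h a b hab)))
      (fun a b => (pjoin φ (pimp σ π)).r a b ∨ (pjoin φ (pimp τ π)).r a b)
      (fun a b => by
        constructor
        · rintro (⟨hphi, rfl | ⟨hp, hs⟩⟩ | ⟨hphi, rfl | ⟨hp, ht⟩⟩)
          · exact Or.inl rfl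
          · exact Or.inr ⟨hphi, Or.inl hs⟩
          · exact Or.inl rfl
          · exact Or.inr ⟨hphi, Or.inr ht⟩
        · rintro (rfl | ⟨hphi, hs | ht⟩)
          · exact Or.inl ⟨φ.iseqv.refl a, Or.inl rfl⟩
          · exact Or.inl ⟨hphi, Or.inr ⟨h a b hphi, hs⟩⟩
          · exact Or.inr ⟨hphi, Or.inr ⟨h a b hphi, ht⟩⟩) x y
    show (φ.r x y ∧ Relation.EqvGen _ x y) ↔ Relation.EqvGen _ x y
    rw [hL, hR]
    constructor
    · rintro ⟨hphi, rfl | ⟨hp, hq⟩⟩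
      · exact Or.inl rfl
      · exact Or.inr ⟨hphi, hq⟩
    · rintro (rfl | ⟨hphi, hq⟩)
      · exact ⟨φ.iseqv.refl x, Or.inl rfl⟩
      · exact ⟨hphi, Or.inr ⟨h x y hphi, hq⟩⟩
  · -- meet-distributivity
    apply Setoid.ext
    intro x y
    have hL := eqvgen_char' φ π h (fun a => np σ π a ∧ np τ π a)
      (fun a b hab hq => ⟨np_congr σ π hab hq.1, np_congr τ π hab hq.2⟩)
      (fun a b => φ.r a b ∨ (pjoin (pimp σ π) (pimp τ π)).r a b)
      (fun a b => by
        constructor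
        · rintro (hphi | ⟨rfl | ⟨hp, hs⟩, h2⟩)
          · exact Or.inl hphi
          · exact Or.inl (φ.iseqv.refl a)
          · rcases h2 with rfl | ⟨hp2, ht⟩
            · exact Or.inl (φ.iseqv.refl a)
            · exact Or.inr ⟨hp, hs, ht⟩
        · rintro (hphi | ⟨hp, hs, ht⟩)
          · exact Or.inl hphi
          · exact Or.inr ⟨Or.inr ⟨hp, hs⟩, Or.inr ⟨hp, ht⟩⟩) x y
    have hR1 := eqvgen_char' φ π h (np σ π) (fun a b hab => np_congr σ π hab)
      (fun a b => φ.r a b ∨ (pimp σ π).r a b)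
      (fun a b => by
        constructor
        · rintro (hphi | rfl | ⟨hp, hs⟩)
          · exact Or.inl hphi
          · exact Or.inl (φ.iseqv.refl a)
          · exact Or.inr ⟨hp, hs⟩
        · rintro (hphi | ⟨hp, hs⟩)
          · exact Or.inl hphi
          · exact Or.inr (Or.inr ⟨hp, hs⟩)) x y
    have hR2 := eqvgen_char' φ π h (np τ π) (fun a b hab => np_congr τ π hab)
      (fun a b => φ.r a b ∨ (pimp τ π).r a b)
      (fun a b => by
        constructor
        · rintro (hphi | rfl | ⟨hp, ht⟩)
          · exact Or.inl hphi
          · exact Or.inl (φ.iseqv.refl a)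
          · exact Or.inr ⟨hp, ht⟩
        · rintro (hphi | ⟨hp, ht⟩)
          · exact Or.inl hphi
          · exact Or.inr (Or.inr ⟨hp, ht⟩)) x y
    show Relation.EqvGen _ x y ↔ (Relation.EqvGen _ x y ∧ Relation.EqvGen _ x y)
    rw [hL, hR1, hR2]
    constructor
    · rintro (hphi | ⟨hp, hs, ht⟩)
      · exact ⟨Or.inl hphi, Or.inl hphi⟩
      · exact ⟨Or.inr ⟨hp, hs⟩, Or.inr ⟨hp, ht⟩⟩
    · rintro ⟨hphi1 | ⟨hp1, hs⟩, hphi2 | ⟨hp2, ht⟩⟩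
      · exact Or.inl hphi1
      · exact Or.inl hphi1
      · exact Or.inl hphi2
      · exact Or.inr ⟨hp1, hs, ht⟩
end

section
/- Let π be an equivalence relation on a set U and let NS(π) be the set of π-equivalence classes containing at least two elements. For A ⊆ NS(π), define Φ(A) to be the equivalence relation with x ∼_{Φ(A)} y iff x = y, or (x ∼_π y and the π-class {z : x ∼_π z} is not a member of A). Then: (i) for all A, A' ⊆ NS(π), ∼_{Φ(A')} ⊆ ∼_{Φ(A)} if and only if A ⊆ A' (so Φ is an order anti-embedding, in particular injective); and (ii) the range of Φ is exactly the set of π-regular partitions, i.e., {σ⇒π : σ an equivalence relation on U}. Hence the Boolean core B_π of [π,1] is isomorphic to the powerset Boolean algebra ℘(π_ns) on the non-singleton blocks of π. -/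
private lemma classEq {U : Type*} (π : Setoid U) {x y : U} (h : π.r x y) :
    {z | π.r y z} = {z | π.r x z} := by
  ext z
  exact ⟨fun hz => π.iseqv.trans h hz, fun hz => π.iseqv.trans (π.iseqv.symm h) hz⟩

/-- `NS π`: the set of π-equivalence classes containing at least two elements
(the non-singleton blocks of `π`). -/
def NS {U : Type*} (π : Setoid U) : Set (Set U) :=
  {B | (∃ x, B = {z | π.r x z}) ∧ ∃ x y, x ∈ B ∧ y ∈ B ∧ x ≠ y}

/-- `Phi π A`: the equivalence relation keeping whole exactly the π-blocks not
in `A` (discretizing the blocks in `A`). -/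
def Phi {U : Type*} (π : Setoid U) (A : Set (Set U)) : Setoid U where
  r x y := x = y ∨ (π.r x y ∧ {z | π.r x z} ∉ A)
  iseqv := by
    refine ⟨fun x => Or.inl rfl, ?_, ?_⟩
    · rintro x y (rfl | ⟨hxy, hA⟩)
      · exact Or.inl rfl
      · exact Or.inr ⟨π.iseqv.symm hxy, by rw [classEq π hxy]; exact hA⟩
    · rintro x y z (rfl | ⟨hxy, hA⟩) h2
      · exact h2
      · rcases h2 with rfl | ⟨hyz, _⟩
        · exact Or.inr ⟨hxy, hA⟩
        · exact Or.inr ⟨π.iseqv.trans hxy hyz, hA⟩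

/-- `Phi` is an order anti-embedding of the powerset of the non-singleton
blocks of `π` onto the set of π-regular partitions `{σ⇒π}`; hence the Boolean
core `B_π` is isomorphic to the powerset Boolean algebra `℘(π_ns)`. -/
theorem boolean_core_iso_powerset {U : Type*} (π : Setoid U) :
    (∀ A A' : Set (Set U), A ⊆ NS π → A' ⊆ NS π →
      ((∀ x y : U, (Phi π A').r x y → (Phi π A).r x y) ↔ A ⊆ A')) ∧
    (∀ A : Set (Set U), A ⊆ NS π → ∃ σ : Setoid U, Phi π A = pimp σ π) ∧
    (∀ σ : Setoid U, ∃ A : Set (Set U), A ⊆ NS π ∧ pimp σ π = Phi π A) := by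
  refine ⟨?_, ?_, ?_⟩
  · intro A A' hA hA'
    constructor
    · intro h B hB
      by_contra hB'
      obtain ⟨⟨x, rfl⟩, a, b, ha, hb, hab⟩ := hA hB
      have hr : (Phi π A').r a b := by
        refine Or.inr ⟨π.iseqv.trans (π.iseqv.symm ha) hb, ?_⟩
        rwa [classEq π ha]
      rcases h a b hr with rfl | ⟨_, hnA⟩
      · exact hab rfl
      · rw [classEq π ha] at hnA; exact hnA hB
    · rintro hsub x y (rfl | ⟨hxy, hnA⟩)
      · exact Or.inl rfl
      · exact Or.inr ⟨hxy, fun h => hnA (hsub h)⟩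
  · intro A hA
    refine ⟨Phi π (NS π \ A), ?_⟩
    apply Setoid.ext
    intro x y
    show _ ∨ _ ↔ _ ∨ _
    by_cases hmem : {z | π.r x z} ∈ A
    · constructor
      · rintro (rfl | ⟨_, hnA⟩)
        · exact Or.inl rfl
        · exact absurd hmem hnA
      · rintro (rfl | ⟨hxy, hns⟩)
        · exact Or.inl rfl
        · exfalso
          apply hns
          intro z hz
          exact Or.inr ⟨hz, fun h => h.2 hmem⟩
    · by_cases hNS : {z | π.r x z} ∈ NS π
      · constructor
        · rintro (rfl | ⟨hxy, _⟩)
          · exact Or.inl rfl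
          · refine Or.inr ⟨hxy, ?_⟩
            intro hsub
            obtain ⟨a, b, ha, hb, hab⟩ := hNS.2
            have ha' := hsub ha
            have hb' := hsub hb
            rcases ha' with rfl | ⟨_, h⟩
            · rcases hb' with rfl | ⟨_, h⟩
              · exact hab rfl
              · exact h ⟨hNS, hmem⟩
            · exact h ⟨hNS, hmem⟩
        · rintro (rfl | ⟨hxy, _⟩)
          · exact Or.inl rfl
          · exact Or.inr ⟨hxy, hmem⟩
      · -- singleton class
        have hsing : ∀ z, π.r x z → z = x := by
          intro z hz
          by_contra hne
          exact hNS ⟨⟨x, rfl⟩, x, z, π.iseqv.refl x, hz, fun h => hne h.symm⟩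
        constructor
        · rintro (rfl | ⟨hxy, _⟩)
          · exact Or.inl rfl
          · exact Or.inl (hsing y hxy).symm
        · rintro (rfl | ⟨hxy, _⟩)
          · exact Or.inl rfl
          · exact Or.inl (hsing y hxy).symm
  · intro σ
    refine ⟨NS π ∩ {B | ∃ x, B = {z | π.r x z} ∧ {z | π.r x z} ⊆ {z | σ.r x z}},
      Set.inter_subset_left, ?_⟩
    apply Setoid.ext
    intro x y
    show _ ∨ _ ↔ _ ∨ _
    by_cases hNS : {z | π.r x z} ∈ NS π
    · constructor
      · rintro (rfl | ⟨hxy, hns⟩)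
        · exact Or.inl rfl
        · refine Or.inr ⟨hxy, ?_⟩
          rintro ⟨-, x', hx', hsub⟩
          apply hns
          have hxx' : π.r x' x := by
            have : x ∈ {z | π.r x z} := π.iseqv.refl x
            rw [hx'] at this; exact this
          have hσ : σ.r x' x := hsub hxx'
          intro z hz
          have : z ∈ {z | π.r x' z} := by rw [← hx']; exact hz
          exact σ.iseqv.trans (σ.iseqv.symm hσ) (hsub this)
      · rintro (rfl | ⟨hxy, hnA⟩)
        · exact Or.inl rfl
        · refine Or.inr ⟨hxy, fun hsub => hnA ⟨hNS, x, rfl, hsub⟩⟩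
    · have hsing : ∀ z, π.r x z → z = x := by
        intro z hz
        by_contra hne
        exact hNS ⟨⟨x, rfl⟩, x, z, π.iseqv.refl x, hz, fun h => hne h.symm⟩
      constructor
      · rintro (rfl | ⟨hxy, _⟩)
        · exact Or.inl rfl
        · exact Or.inl (hsing y hxy).symm
      · rintro (rfl | ⟨hxy, _⟩)
        · exact Or.inl rfl
        · exact Or.inl (hsing y hxy).symm
end
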